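/- arXiv:1705.02979 — 2 statements merged into one kernel-verified Lean document; each statement's English description precedes it below -/
import Mathlib

section
/- If f : T_q × D → ℂ is almost periodic in t uniformly in x ∈ D, then for every compact subset S of D the function f is bounded on T_q × S and uniformly continuous on T_q × S (with respect to the metric inherited from ℝ × ℂ). -/
open Filter Topology

/-- The quantum time scale `T_q = {q^n : n ∈ ℤ} ∪ {0}`. -/
def Tq (q : ℝ) : Set ℝ := {t : ℝ | (∃ n : ℤ, t = q ^ n) ∨ t = 0}

/-- `f : T_q × D → ℂ` is almost periodic in `t ∈ T_q` uniformly in `x ∈ D`. -/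
def APUnif (q : ℝ) (D : Set ℂ) (f : ℝ → ℂ → ℂ) : Prop :=
  ContinuousOn (fun p : ℝ × ℂ => f p.1 p.2) (Tq q ×ˢ D) ∧
  ∀ ε : ℝ, 0 < ε → ∀ S : Set ℂ, S ⊆ D → IsCompact S →
    ∃ ℓ : ℕ, 0 < ℓ ∧ ∀ p : ℤ, ∃ τ : ℤ, p ≤ τ ∧ τ ≤ p + ℓ ∧
      ∀ t ∈ Tq q, ∀ x ∈ S, ‖f (q ^ τ * t) x - f t x‖ < ε

/-!
Almost periodicity moves every `t ∈ T_q`, up to `ε` uniformly in `x ∈ S`, into the compact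
set `{0} ∪ {q^n : n ≤ N}` for some `N`. On its product with `S` the function is bounded and
uniformly continuous, and both properties transfer to `T_q × S` up to `ε`. For uniform
continuity one also uses that `T_q` is discrete above `1`: two distinct points of `T_q` at
distance `< q - 1` both lie in `[0, 1]`, hence in the compact set.
-/

namespace Tq

variable {q : ℝ}

protected lemma zpow_mem (n : ℤ) : q ^ n ∈ Tq q := Or.inl ⟨n, rfl⟩

protected lemma zero_mem : (0 : ℝ) ∈ Tq q := Or.inr rfl

lemma le_zpow_sub_one_of_lt_zpow (hq : 1 < q) {t : ℝ} (ht : t ∈ Tq q) {n : ℤ}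
    (h : t < q ^ n) : t ≤ q ^ (n - 1) := by
  rcases ht with ⟨m, rfl⟩ | rfl
  · exact zpow_le_zpow_right₀ hq.le (by linarith [(zpow_lt_zpow_iff_right₀ hq).mp h])
  · positivity

lemma le_one_of_lt_of_sub_lt (hq : 1 < q) {t t' : ℝ} (ht : t ∈ Tq q) (ht' : t' ∈ Tq q)
    (hlt : t' < t) (hd : t - t' < q - 1) : t ≤ 1 := by
  rcases ht with ⟨n, rfl⟩ | rfl
  · by_contra! h
    have hn : 1 ≤ n := by
      have := (one_lt_zpow_iff_right₀ hq).mp h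
      omega
    have hpow : 1 ≤ q ^ (n - 1) := one_le_zpow₀ hq.le (by omega)
    have hsucc : q ^ n = q ^ (n - 1) * q := by
      rw [← zpow_add_one₀ (by positivity), sub_add_cancel]
    have := le_zpow_sub_one_of_lt_zpow hq ht' hlt
    nlinarith
  · exact zero_le_one

lemma eq_or_le_one_of_dist_lt (hq : 1 < q) {t t' : ℝ} (ht : t ∈ Tq q) (ht' : t' ∈ Tq q)
    (hd : dist t t' < q - 1) : t = t' ∨ t ≤ 1 ∧ t' ≤ 1 := by
  rw [Real.dist_eq] at hd
  rcases lt_trichotomy t' t with h | rfl | h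
  · have := le_one_of_lt_of_sub_lt hq ht ht' h (lt_of_le_of_lt (le_abs_self _) hd)
    exact Or.inr ⟨this, h.le.trans this⟩
  · exact Or.inl rfl
  · rw [abs_sub_comm] at hd
    have := le_one_of_lt_of_sub_lt hq ht' ht h (lt_of_le_of_lt (le_abs_self _) hd)
    exact Or.inr ⟨h.le.trans this, this⟩

def initialSegment (q : ℝ) (N : ℤ) : Set ℝ :=
  insert 0 (Set.range fun j : ℕ => q ^ (N - j))

lemma initialSegment_subset (N : ℤ) : initialSegment q N ⊆ Tq q := by
  rintro t (rfl | ⟨j, rfl⟩)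
  · exact Tq.zero_mem
  · exact Tq.zpow_mem _

lemma zpow_mem_initialSegment {N n : ℤ} (h : n ≤ N) : q ^ n ∈ initialSegment q N :=
  Or.inr ⟨(N - n).toNat, by simp only [Int.toNat_of_nonneg (sub_nonneg.mpr h), sub_sub_cancel]⟩

lemma mem_initialSegment_of_le (hq : 1 < q) {t : ℝ} (ht : t ∈ Tq q) {N : ℤ}
    (h : t ≤ q ^ N) : t ∈ initialSegment q N := by
  rcases ht with ⟨n, rfl⟩ | rfl
  · exact zpow_mem_initialSegment ((zpow_le_zpow_iff_right₀ hq).mp h)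
  · exact Set.mem_insert _ _

lemma isCompact_initialSegment (hq : 1 < q) (N : ℤ) : IsCompact (initialSegment q N) := by
  apply Tendsto.isCompact_insert_range
  have hq0 : q ≠ 0 := by positivity
  have h : (fun j : ℕ => q ^ (N - j)) = fun j : ℕ => q ^ N * q⁻¹ ^ j := by
    funext j
    rw [zpow_sub₀ hq0, div_eq_mul_inv, ← inv_zpow, zpow_natCast]
  rw [h]
  simpa using (tendsto_pow_atTop_nhds_zero_of_lt_one (by positivity)
    (inv_lt_one_of_one_lt₀ hq)).const_mul (q ^ N)

end Tq

open Tq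

lemma APUnif.exists_translate_mem_initialSegment {q : ℝ} (hq : 1 < q) {D S : Set ℂ}
    {f : ℝ → ℂ → ℂ} (hf : APUnif q D f) (hSD : S ⊆ D) (hS : IsCompact S) {ε : ℝ} (hε : 0 < ε) :
    ∃ N : ℕ, ∀ t ∈ Tq q, ∃ s ∈ initialSegment q N, ∀ x ∈ S, ‖f s x - f t x‖ < ε := by
  obtain ⟨ℓ, -, hℓ⟩ := hf.2 ε hε S hSD hS
  refine ⟨ℓ, ?_⟩
  rintro t (⟨n, rfl⟩ | rfl)
  · obtain ⟨τ, hτ, hτℓ, hclose⟩ := hℓ (-n)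
    refine ⟨q ^ (τ + n), zpow_mem_initialSegment (by omega), fun x hx => ?_⟩
    rw [zpow_add₀ (by positivity)]
    exact hclose _ (Tq.zpow_mem n) x hx
  · exact ⟨0, Set.mem_insert _ _, fun x _ => by simpa using hε⟩

lemma exists_bound_of_translates {α β E : Type*} [TopologicalSpace α] [TopologicalSpace β]
    [SeminormedAddCommGroup E] {g : α → β → E} {T K : Set α} {S : Set β}
    (hK : IsCompact K) (hS : IsCompact S)
    (hg : ContinuousOn (fun p : α × β => g p.1 p.2) (K ×ˢ S)) {c : ℝ}
    (htr : ∀ t ∈ T, ∃ s ∈ K, ∀ x ∈ S, ‖g s x - g t x‖ < c) :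
    ∃ M, ∀ t ∈ T, ∀ x ∈ S, ‖g t x‖ ≤ M := by
  obtain ⟨C, hC⟩ := (hK.prod hS).exists_bound_of_continuousOn hg
  refine ⟨C + c, fun t ht x hx => ?_⟩
  obtain ⟨s, hs, hst⟩ := htr t ht
  calc ‖g t x‖ ≤ ‖g s x‖ + ‖g s x - g t x‖ := norm_le_norm_add_norm_sub _ _
    _ ≤ C + c := add_le_add (hC (s, x) ⟨hs, hx⟩) (hst x hx).le

lemma APUnif.exists_bound {q : ℝ} (hq : 1 < q) {D S : Set ℂ} {f : ℝ → ℂ → ℂ}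
    (hf : APUnif q D f) (hSD : S ⊆ D) (hS : IsCompact S) :
    ∃ M : ℝ, ∀ t ∈ Tq q, ∀ x ∈ S, ‖f t x‖ ≤ M := by
  obtain ⟨N, htr⟩ := hf.exists_translate_mem_initialSegment hq hSD hS one_pos
  exact exists_bound_of_translates (isCompact_initialSegment hq N) hS
    (hf.1.mono (Set.prod_mono (initialSegment_subset N) hSD)) htr

lemma APUnif.uniformContinuousOn {q : ℝ} (hq : 1 < q) {D S : Set ℂ} {f : ℝ → ℂ → ℂ}
    (hf : APUnif q D f) (hSD : S ⊆ D) (hS : IsCompact S) :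
    UniformContinuousOn (fun p : ℝ × ℂ => f p.1 p.2) (Tq q ×ˢ S) := by
  rw [Metric.uniformContinuousOn_iff]
  intro ε hε
  obtain ⟨N, htr⟩ := hf.exists_translate_mem_initialSegment hq hSD hS (by positivity : 0 < ε / 3)
  have hKS : UniformContinuousOn (fun p : ℝ × ℂ => f p.1 p.2) (initialSegment q N ×ˢ S) :=
    ((isCompact_initialSegment hq N).prod hS).uniformContinuousOn_of_continuous
      (hf.1.mono (Set.prod_mono (initialSegment_subset N) hSD))
  obtain ⟨δ, hδ, hδKS⟩ := Metric.uniformContinuousOn_iff.mp hKS (ε / 3) (by positivity)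
  have hsmall {s : ℝ} (hs : s ∈ Tq q) (h : s ≤ 1) : s ∈ initialSegment q N :=
    mem_initialSegment_of_le hq hs (h.trans (one_le_pow₀ hq.le))
  refine ⟨min δ (q - 1), lt_min hδ (sub_pos.mpr hq), ?_⟩
  rintro ⟨t, x⟩ ⟨ht, hx⟩ ⟨t', x'⟩ ⟨ht', hx'⟩ hd
  rw [Prod.dist_eq, max_lt_iff, lt_min_iff, lt_min_iff] at hd
  obtain ⟨⟨hdt, hdt'⟩, hdx, -⟩ := hd
  rcases eq_or_le_one_of_dist_lt hq ht ht' hdt' with rfl | ⟨h, h'⟩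
  · obtain ⟨s, hs, hst⟩ := htr t ht
    have hsx : dist (f s x) (f s x') < ε / 3 :=
      hδKS (s, x) ⟨hs, hx⟩ (s, x') ⟨hs, hx'⟩ (by rw [Prod.dist_eq, dist_self]; exact max_lt hδ hdx)
    calc dist (f t x) (f t x')
        ≤ dist (f t x) (f s x) + dist (f s x) (f s x') + dist (f s x') (f t x') :=
          dist_triangle4 _ _ _ _
      _ < ε / 3 + ε / 3 + ε / 3 := by
        gcongr
        · rw [dist_comm, dist_eq_norm]; exact hst x hx
        · rw [dist_eq_norm]; exact hst x' hx'
      _ = ε := by ring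
  · exact (hδKS (t, x) ⟨hsmall ht h, hx⟩ (t', x') ⟨hsmall ht' h', hx'⟩
      (by rw [Prod.dist_eq]; exact max_lt hdt hdx)).trans (by linarith)

theorem stmt_0_general (q : ℝ) (hq : 1 < q) (D : Set ℂ)
    (f : ℝ → ℂ → ℂ) (hf : APUnif q D f) :
    ∀ S : Set ℂ, S ⊆ D → IsCompact S →
      (∃ M : ℝ, ∀ t ∈ Tq q, ∀ x ∈ S, ‖f t x‖ ≤ M) ∧
      UniformContinuousOn (fun p : ℝ × ℂ => f p.1 p.2) (Tq q ×ˢ S) :=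
  fun _ hSD hS => ⟨hf.exists_bound hq hSD hS, hf.uniformContinuousOn hq hSD hS⟩

/-- If `f` is almost periodic in `t` uniformly in `x ∈ D`, then for every compact subset
`S ⊆ D` the function `f` is bounded on `T_q × S` and uniformly continuous on `T_q × S`. -/
theorem stmt_0 (q : ℝ) (hq : 1 < q) (D : Set ℂ) (hD : IsOpen D)
    (f : ℝ → ℂ → ℂ) (hf : APUnif q D f) :
    ∀ S : Set ℂ, S ⊆ D → IsCompact S →
      (∃ M : ℝ, ∀ t ∈ Tq q, ∀ x ∈ S, ‖f t x‖ ≤ M) ∧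
      UniformContinuousOn (fun p : ℝ × ℂ => f p.1 p.2) (Tq q ×ˢ S) :=
  stmt_0_general q hq D f hf
end

section
/- Fix a positive integer m and a constant r₀ > 0. For i, j, l ∈ {1, …, m}, let ĉ_i, â_{ij}, b̂_{ijl}, Î_i : ℤ → ℝ be almost periodic sequences and let γ_{ij}, ω_{ijl}, v_{ijl} : ℤ → ℕ be almost periodic sequences. Let f_j, g_j : ℝ → ℝ and positive constants ϵ_j, ε_j, N_j satisfy: (H1) |f_j(u) − f_j(v)| ≤ ϵ_j|u − v| and |g_j(u) − g_j(v)| ≤ ε_j|u − v| for all u, v ∈ ℝ; (H2) |g_j(u)| ≤ N_j for all u ∈ ℝ; (H3) 1 − ĉ_i(n) > 0 for all n ∈ ℤ and ĉ_i⁻ := inf_{n∈ℤ} ĉ_i(n) > 0 for each i. Set â⁺_{ij} = sup_n |â_{ij}(n)|, b̂⁺_{ijl} = sup_n |b̂_{ijl}(n)|, Î⁺_i = sup_n |Î_i(n)|, L = max_i (Î⁺_i / ĉ_i⁻), η_i = Σ_{j=1}^m [ â⁺_{ij}(|f_j(0)| + ϵ_j r₀) + (|g_j(0)| + ε_j r₀)·Σ_{l=1}^m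 b̂⁺_{ijl}(|g_l(0)| + ε_l r₀) ], and η̄_i = Σ_{j=1}^m â⁺_{ij} ϵ_j + Σ_{j=1}^m Σ_{l=1}^m b̂⁺_{ijl}(N_l ε_j + N_j ε_l). Assume (H4): max_i (η_i / ĉ_i⁻) + L ≤ r₀ and max_i η̄_i < min_i ĉ_i⁻. Then the high-order Hopfield neural network system x_i(n+1) − x_i(n) = −ĉ_i(n)x_i(n) + Σ_{j=1}^m â_{ij}(n) f_j(x_j(n − γ_{ij}(n))) + Σ_{j=1}^m Σ_{l=1}^m b̂_{ijl}(n) g_j(x_j(n − ω_{ijl}(n))) g_l(x_l(n − v_{ijl}(n))) + Î_i(n), i = 1, …, m, n ∈ ℤ, has exactly one solution x = (x_1, …, x_m) : ℤ → ℝ^m such that each component x_i is an almost periodic sequence and sup_{n∈ℤ} max_{1≤i≤m} |x_i(n)| ≤ r₀. -/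
open Filter Topology

/-- A sequence `h : ℤ → ℝ` is almost periodic: for every `ε > 0` there is a positive
integer `ℓ` such that every set of `ℓ` consecutive integers contains an `ε`-almost
period `τ`. -/
def APseq (h : ℤ → ℝ) : Prop :=
  ∀ ε : ℝ, 0 < ε → ∃ ℓ : ℕ, 0 < ℓ ∧ ∀ p : ℤ, ∃ τ : ℤ, p ≤ τ ∧ τ < p + ℓ ∧
    ∀ n : ℤ, |h (n + τ) - h n| < ε

/-!
Write the system as `xᵢ(n+1) = (1 - ĉᵢ(n)) xᵢ(n) + gᵢ(x)(n)`. A bounded solution is a fixed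
point of the variation-of-constants operator
`(T x)ᵢ(n) = ∑_{k ≥ 0} (∏_{j<k} (1 - ĉᵢ(n-1-j))) gᵢ(x)(n-1-k)`,
a series dominated by a geometric one of ratio `1 - ĉᵢ⁻`. By (H1)–(H4), `T` maps the set of
almost periodic sequences bounded by `r₀` into itself and is a contraction of ratio
`maxᵢ η̄ᵢ / ĉᵢ⁻ < 1` for the uniform distance; this set is closed, so Banach's theorem gives
the solution. Almost periodicity survives sums, products, Lipschitz maps, almost periodic
integer delays and uniform limits, which all rest on the existence of common almost periods of
two sequences. Uniqueness among all solutions bounded by `r₀` comes from the one-step estimate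
`|xᵢ(n+1) - yᵢ(n+1)| ≤ (1 - ĉᵢ⁻ + η̄ᵢ) supₙ,ⱼ |xⱼ(n) - yⱼ(n)|`.
-/

open scoped NNReal BoundedContinuousFunction

theorem nonneg_of_lipschitz {f : ℝ → ℝ} {K : ℝ} (hf : ∀ u w, |f u - f w| ≤ K * |u - w|) :
    0 ≤ K := by
  simpa using (abs_nonneg _).trans (hf 1 0)

theorem abs_le_abs_zero_add_of_lipschitz {f : ℝ → ℝ} {K u r : ℝ}
    (hf : ∀ u w, |f u - f w| ≤ K * |u - w|) (hu : |u| ≤ r) : |f u| ≤ |f 0| + K * r := by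
  have := hf u 0
  rw [sub_zero] at this
  linarith [abs_sub_abs_le_abs_sub (f u) (f 0),
    mul_le_mul_of_nonneg_left hu (nonneg_of_lipschitz hf)]

theorem abs_mul_sub_mul_le (p q p' q' : ℝ) :
    |p * q - p' * q'| ≤ |p - p'| * |q| + |p'| * |q - q'| := by
  rw [← abs_mul, ← abs_mul, show p * q - p' * q' = (p - p') * q + p' * (q - q') by ring]
  exact abs_add_le _ _

theorem exists_nnreal_lt_one_forall_le {ι : Type*} [Fintype ι] {f : ι → ℝ} (hf : ∀ i, f i < 1) :
    ∃ ρ : ℝ≥0, ρ < 1 ∧ ∀ i, f i ≤ ρ :=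
  ⟨Finset.univ.sup fun i => (f i).toNNReal,
    (Finset.sup_lt_iff zero_lt_one).2 fun i _ => Real.toNNReal_lt_one.2 (hf i),
    fun i => (Real.le_coe_toNNReal _).trans <| NNReal.coe_le_coe.2 <|
      Finset.le_sup (f := fun i => (f i).toNNReal) (Finset.mem_univ i)⟩

theorem eq_zero_of_abs_le_of_contracting_bound {α : Type*} {u : α → ℝ} {B σ : ℝ}
    (hB : ∀ p, |u p| ≤ B) (hσ0 : 0 ≤ σ) (hσ1 : σ < 1)
    (h : ∀ D, (∀ p, |u p| ≤ D) → ∀ p, |u p| ≤ σ * D) (p : α) : u p = 0 := by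
  have hK : ∀ K : ℕ, ∀ p, |u p| ≤ σ ^ K * B := by
    intro K
    induction K with
    | zero => simpa using hB
    | succ K ih => simpa only [pow_succ', mul_assoc] using h _ ih
  have hlim : Tendsto (fun K : ℕ => σ ^ K * B) atTop (𝓝 0) := by
    simpa using (tendsto_pow_atTop_nhds_zero_of_lt_one hσ0 hσ1).mul_const B
  exact abs_nonpos_iff.1 (ge_of_tendsto' hlim fun K => hK K p)

theorem exists_fixedPoint_of_uniform_contraction {ι E : Type*} [TopologicalSpace ι]
    [DiscreteTopology ι] [NormedAddCommGroup E] [CompleteSpace E] {S : Set (ι → E)} {C : ℝ}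
    {K : ℝ≥0} {T : (ι → E) → ι → E} (hSC : ∀ x ∈ S, ∀ n, ‖x n‖ ≤ C)
    (hS : ∀ x : ι → E, (∀ ε > 0, ∃ y ∈ S, ∀ n, dist (x n) (y n) ≤ ε) → x ∈ S)
    (hne : S.Nonempty) (hT : Set.MapsTo T S S) (hK : K < 1)
    (hTK : ∀ x ∈ S, ∀ y ∈ S, ∀ d, 0 ≤ d → (∀ n, dist (x n) (y n) ≤ d) →
      ∀ n, dist (T x n) (T y n) ≤ K * d) :
    ∃ x ∈ S, T x = x := by
  set B : Set (ι →ᵇ E) := (⇑) ⁻¹' S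
  have hB : IsClosed B := isClosed_of_closure_subset fun f hf => hS f fun ε hε => by
    obtain ⟨g, hg, hfg⟩ := Metric.mem_closure_iff.1 hf ε hε
    exact ⟨g, hg, fun n => (BoundedContinuousFunction.dist_coe_le_dist n).trans hfg.le⟩
  have := hB.completeSpace_coe
  let lift : ∀ x ∈ S, B := fun x hx =>
    ⟨BoundedContinuousFunction.ofNormedAddCommGroupDiscrete x C (hSC x hx), hx⟩
  have : Nonempty B := ⟨lift _ hne.some_mem⟩
  let TB : B → B := fun f => lift (T f) (hT f.2)
  have hTB : ContractingWith K TB := ⟨hK, LipschitzWith.of_dist_le_mul fun f g =>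
    (BoundedContinuousFunction.dist_le (by positivity)).2 <|
      hTK f f.2 g g.2 _ dist_nonneg fun n => BoundedContinuousFunction.dist_coe_le_dist n⟩
  set f : B := ContractingWith.fixedPoint TB hTB
  exact ⟨⇑(f : ι →ᵇ E), f.2, congrArg (fun g : B => ⇑(g : ι →ᵇ E)) hTB.fixedPoint_isFixedPt⟩

def IsAlmostPeriod (h : ℤ → ℝ) (ε : ℝ) (τ : ℤ) : Prop :=
  ∀ n : ℤ, |h (n + τ) - h n| < ε

theorem IsAlmostPeriod.sub {h : ℤ → ℝ} {ε ε' : ℝ} {τ τ' : ℤ} (hτ : IsAlmostPeriod h ε τ)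
    (hτ' : IsAlmostPeriod h ε' τ') : IsAlmostPeriod h (ε + ε') (τ - τ') := fun n => by
  have h₁ := hτ' (n + (τ - τ'))
  rw [show n + (τ - τ') + τ' = n + τ by ring, abs_sub_comm] at h₁
  calc |h (n + (τ - τ')) - h n|
      ≤ |h (n + (τ - τ')) - h (n + τ)| + |h (n + τ) - h n| := abs_sub_le _ _ _
    _ < ε' + ε := add_lt_add h₁ (hτ n)
    _ = ε + ε' := add_comm _ _

namespace APseq

variable {h h₁ h₂ g : ℤ → ℝ}

theorem exists_common_almostPeriod (hh₁ : APseq h₁) (hh₂ : APseq h₂) {ε : ℝ} (hε : 0 < ε) :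
    ∃ ℓ : ℕ, 0 < ℓ ∧ ∀ p : ℤ, ∃ τ : ℤ, p ≤ τ ∧ τ < p + ℓ ∧
      IsAlmostPeriod h₁ ε τ ∧ IsAlmostPeriod h₂ ε τ := by
  obtain ⟨ℓ₁, -, hℓ₁⟩ := hh₁ (ε / 2) (half_pos hε)
  obtain ⟨ℓ₂, -, hℓ₂⟩ := hh₂ (ε / 2) (half_pos hε)
  choose τ₁ hτ₁l hτ₁r hτ₁ using fun k : ℤ => hℓ₁ (-k)
  choose τ₂ hτ₂l hτ₂r hτ₂ using fun k : ℤ => hℓ₂ (-k)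
  -- `Φ k` lies in a finite box, and `Φ k = Φ s` makes `s - k = τ₁ k - τ₁ s = τ₂ k - τ₂ s` a
  -- difference of `ε / 2`-almost periods of both sequences.
  set Φ : ℤ → ℤ × ℤ := fun k => (k + τ₁ k, k + τ₂ k)
  have hΦ : (Set.range Φ).Finite := by
    refine (Finset.finite_toSet (Finset.Ico 0 (ℓ₁ : ℤ) ×ˢ Finset.Ico 0 (ℓ₂ : ℤ))).subset ?_
    rintro _ ⟨k, rfl⟩
    simp only [Finset.coe_product, Finset.coe_Ico, Set.mem_prod, Set.mem_Ico, Φ]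
    have := hτ₁l k; have := hτ₁r k; have := hτ₂l k; have := hτ₂r k
    omega
  set R := hΦ.toFinset.image (Function.invFun Φ)
  have hR : ∀ s, ∃ k ∈ R, Φ k = Φ s := fun s =>
    ⟨_, Finset.mem_image_of_mem _ (hΦ.mem_toFinset.2 ⟨s, rfl⟩), Function.invFun_eq ⟨s, rfl⟩⟩
  set B := R.sup Int.natAbs
  refine ⟨2 * B + 1, by omega, fun p => ?_⟩
  obtain ⟨k, hkR, hk⟩ := hR (p + B)
  have hkB : k.natAbs ≤ B := Finset.le_sup hkR
  obtain ⟨hk₁, hk₂⟩ := Prod.mk.inj hk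
  refine ⟨τ₁ k - τ₁ (p + B), by omega, by push_cast; omega, ?_, ?_⟩
  · simpa only [add_halves] using IsAlmostPeriod.sub (hτ₁ k) (hτ₁ (p + B))
  · rw [show τ₁ k - τ₁ (p + B) = τ₂ k - τ₂ (p + B) by omega]
    simpa only [add_halves] using IsAlmostPeriod.sub (hτ₂ k) (hτ₂ (p + B))

theorem of_isAlmostPeriod (hh : APseq h)
    (H : ∀ ε > 0, ∃ δ > 0, ∀ τ, IsAlmostPeriod h δ τ → IsAlmostPeriod g ε τ) : APseq g := by
  intro ε hε
  obtain ⟨δ, hδ, hδε⟩ := H ε hε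
  obtain ⟨ℓ, hℓ, hτ⟩ := hh δ hδ
  refine ⟨ℓ, hℓ, fun p => ?_⟩
  obtain ⟨τ, hτl, hτr, hτ⟩ := hτ p
  exact ⟨τ, hτl, hτr, hδε τ hτ⟩

theorem of_isAlmostPeriod₂ (hh₁ : APseq h₁) (hh₂ : APseq h₂)
    (H : ∀ ε > 0, ∃ δ > 0, ∀ τ, IsAlmostPeriod h₁ δ τ → IsAlmostPeriod h₂ δ τ →
      IsAlmostPeriod g ε τ) : APseq g := by
  intro ε hε
  obtain ⟨δ, hδ, hδε⟩ := H ε hε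
  obtain ⟨ℓ, hℓ, hτ⟩ := exists_common_almostPeriod hh₁ hh₂ hδ
  refine ⟨ℓ, hℓ, fun p => ?_⟩
  obtain ⟨τ, hτl, hτr, hτ₁, hτ₂⟩ := hτ p
  exact ⟨τ, hτl, hτr, hδε τ hτ₁ hτ₂⟩

theorem exists_abs_le (hh : APseq h) : ∃ M, ∀ n, |h n| ≤ M := by
  obtain ⟨ℓ, -, hℓ⟩ := hh 1 one_pos
  refine ⟨∑ k ∈ Finset.Ico 0 (ℓ : ℤ), |h k| + 1, fun n => ?_⟩
  obtain ⟨τ, hτl, hτr, hτ⟩ := hℓ (-n)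
  have hwindow : |h (n + τ)| ≤ ∑ k ∈ Finset.Ico 0 (ℓ : ℤ), |h k| :=
    Finset.single_le_sum (f := fun k => |h k|) (fun _ _ => abs_nonneg _)
      (Finset.mem_Ico.2 ⟨by omega, by omega⟩)
  have := abs_sub_abs_le_abs_sub (h n) (h (n + τ))
  rw [abs_sub_comm] at this
  linarith [hτ n]

theorem const (r : ℝ) : APseq fun _ => r := fun ε hε =>
  ⟨1, one_pos, fun p => ⟨p, le_rfl, by omega, fun n => by simpa using hε⟩⟩

theorem neg (hh : APseq h) : APseq fun n => -h n :=
  hh.of_isAlmostPeriod fun ε hε =>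
    ⟨ε, hε, fun τ hτ n => by rw [neg_sub_neg, abs_sub_comm]; exact hτ n⟩

theorem comp_sub_const (hh : APseq h) (t : ℤ) : APseq fun n => h (n - t) :=
  hh.of_isAlmostPeriod fun ε hε =>
    ⟨ε, hε, fun τ hτ n => by simpa only [sub_add_eq_add_sub] using hτ (n - t)⟩

theorem comp_lipschitz (hh : APseq h) {f : ℝ → ℝ} {K : ℝ}
    (hf : ∀ u w, |f u - f w| ≤ K * |u - w|) : APseq fun n => f (h n) := by
  have hK := nonneg_of_lipschitz hf
  refine hh.of_isAlmostPeriod fun ε hε => ⟨ε / (K + 1), by positivity, fun τ hτ n => ?_⟩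
  calc |f (h (n + τ)) - f (h n)| ≤ K * (ε / (K + 1)) :=
        (hf _ _).trans (mul_le_mul_of_nonneg_left (hτ n).le hK)
    _ < ε := by
        rw [mul_div_assoc', div_lt_iff₀ (by positivity)]
        linarith

theorem add (hh₁ : APseq h₁) (hh₂ : APseq h₂) : APseq fun n => h₁ n + h₂ n := by
  refine of_isAlmostPeriod₂ hh₁ hh₂ fun ε hε => ⟨ε / 2, half_pos hε, fun τ hτ₁ hτ₂ n => ?_⟩
  calc |h₁ (n + τ) + h₂ (n + τ) - (h₁ n + h₂ n)|
      = |(h₁ (n + τ) - h₁ n) + (h₂ (n + τ) - h₂ n)| := by ring_nf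
    _ ≤ |h₁ (n + τ) - h₁ n| + |h₂ (n + τ) - h₂ n| := abs_add_le _ _
    _ < ε / 2 + ε / 2 := add_lt_add (hτ₁ n) (hτ₂ n)
    _ = ε := add_halves ε

theorem sub (hh₁ : APseq h₁) (hh₂ : APseq h₂) : APseq fun n => h₁ n - h₂ n := by
  simpa only [sub_eq_add_neg] using hh₁.add hh₂.neg

theorem mul (hh₁ : APseq h₁) (hh₂ : APseq h₂) : APseq fun n => h₁ n * h₂ n := by
  obtain ⟨M₁, hM₁⟩ := hh₁.exists_abs_le
  obtain ⟨M₂, hM₂⟩ := hh₂.exists_abs_le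
  have hM₁0 : 0 ≤ M₁ := (abs_nonneg _).trans (hM₁ 0)
  have hM₂0 : 0 ≤ M₂ := (abs_nonneg _).trans (hM₂ 0)
  refine of_isAlmostPeriod₂ hh₁ hh₂ fun ε hε =>
    ⟨ε / (M₁ + M₂ + 1), by positivity, fun τ hτ₁ hτ₂ n => ?_⟩
  calc |h₁ (n + τ) * h₂ (n + τ) - h₁ n * h₂ n|
      ≤ |h₁ (n + τ) - h₁ n| * |h₂ (n + τ)| + |h₁ n| * |h₂ (n + τ) - h₂ n| :=
        abs_mul_sub_mul_le _ _ _ _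
    _ ≤ ε / (M₁ + M₂ + 1) * M₂ + M₁ * (ε / (M₁ + M₂ + 1)) := by
        gcongr
        exacts [(hτ₁ n).le, hM₂ _, hM₁ n, (hτ₂ n).le]
    _ < ε := by
        rw [← mul_div_right_comm, mul_div_assoc', ← add_div, div_lt_iff₀ (by positivity)]
        nlinarith

theorem sum {ι : Type*} {s : Finset ι} {f : ι → ℤ → ℝ} (hf : ∀ j ∈ s, APseq (f j)) :
    APseq fun n => ∑ j ∈ s, f j n := by
  rw [← Finset.sum_fn]
  exact Finset.sum_induction _ APseq (fun _ _ => add) (const 0) hf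

theorem prod {ι : Type*} {s : Finset ι} {f : ι → ℤ → ℝ} (hf : ∀ j ∈ s, APseq (f j)) :
    APseq fun n => ∏ j ∈ s, f j n := by
  rw [← Finset.prod_fn]
  exact Finset.prod_induction _ APseq (fun _ _ => mul) (const 1) hf

theorem comp_sub_delay (hh : APseq h) {γ : ℤ → ℕ} (hγ : APseq fun n => (γ n : ℝ)) :
    APseq fun n => h (n - γ n) := by
  refine of_isAlmostPeriod₂ hh hγ fun ε hε => ⟨min ε 1, lt_min hε one_pos, fun τ hτh hτγ n => ?_⟩
  -- a `1`-almost period of an integer-valued sequence is an exact period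
  have hγτ : γ (n + τ) = γ n := by
    obtain ⟨h₁, h₂⟩ := abs_lt.1 ((hτγ n).trans_le (min_le_right _ _))
    have h₁' : γ n < γ (n + τ) + 1 := by exact_mod_cast (by linarith : (γ n : ℝ) < γ (n + τ) + 1)
    have h₂' : γ (n + τ) < γ n + 1 := by exact_mod_cast (by linarith : (γ (n + τ) : ℝ) < γ n + 1)
    omega
  show |h (n + τ - γ (n + τ)) - h (n - γ n)| < ε
  rw [hγτ, show n + τ - (γ n : ℤ) = n - γ n + τ by ring]
  exact (hτh _).trans_le (min_le_left _ _)

theorem of_uniform_approx {x : ℤ → ℝ}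
    (h : ∀ ε > 0, ∃ y : ℤ → ℝ, APseq y ∧ ∀ n, |x n - y n| ≤ ε) : APseq x := by
  intro ε hε
  obtain ⟨y, hy, hxy⟩ := h (ε / 3) (by positivity)
  obtain ⟨ℓ, hℓ, hτ⟩ := hy (ε / 3) (by positivity)
  refine ⟨ℓ, hℓ, fun p => ?_⟩
  obtain ⟨τ, hτl, hτr, hτ⟩ := hτ p
  refine ⟨τ, hτl, hτr, fun n => ?_⟩
  linarith [abs_sub_le (x (n + τ)) (y (n + τ)) (x n), abs_sub_le (y (n + τ)) (y n) (x n),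
    hxy (n + τ), hxy n, hτ n, abs_sub_comm (y n) (x n)]

end APseq

def evolution (c : ℤ → ℝ) (n : ℤ) (k : ℕ) : ℝ :=
  ∏ j ∈ Finset.range k, (1 - c (n - 1 - j))

/-- Variation of constants: the bounded solution of `x (n + 1) = (1 - c n) x n + u n` when
`κ ≤ c ≤ 1` for some `κ > 0` and `u` is bounded. -/
noncomputable def boundedSol (c u : ℤ → ℝ) (n : ℤ) : ℝ :=
  ∑' k : ℕ, evolution c n k * u (n - 1 - k)

theorem evolution_succ (c : ℤ → ℝ) (n : ℤ) (k : ℕ) :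
    evolution c (n + 1) (k + 1) = (1 - c n) * evolution c n k := by
  rw [evolution, Finset.prod_range_succ', mul_comm, evolution]
  congr 1
  · simp
  · refine Finset.prod_congr rfl fun j _ => ?_
    push_cast
    ring_nf

theorem APseq.evolution {c : ℤ → ℝ} (hc : APseq c) (k : ℕ) : APseq fun n => evolution c n k :=
  APseq.prod fun j _ => (APseq.const 1).sub ((hc.comp_sub_const j).comp_sub_const 1)

theorem hasSum_mul_one_sub_pow {κ : ℝ} (M : ℝ) (hκ0 : 0 < κ) (hκ1 : κ ≤ 1) :
    HasSum (fun k : ℕ => M * (1 - κ) ^ k) (M / κ) := by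
  have h := (hasSum_geometric_of_lt_one (sub_nonneg.2 hκ1) (by linarith)).mul_left M
  rwa [sub_sub_cancel, ← div_eq_mul_inv] at h

section LinearEquation

variable {c u w : ℤ → ℝ} {κ M M' : ℝ}

theorem norm_evolution_mul_le (hc : ∀ n, c n ∈ Set.Icc κ 1) (hu : ∀ n, |u n| ≤ M) (n : ℤ)
    (k : ℕ) : ‖evolution c n k * u (n - 1 - k)‖ ≤ M * (1 - κ) ^ k := by
  have hev : 0 ≤ evolution c n k := Finset.prod_nonneg fun _ _ => sub_nonneg.2 (hc _).2
  have hev_le : evolution c n k ≤ (1 - κ) ^ k := by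
    simpa [evolution] using Finset.prod_le_prod (s := Finset.range k)
      (fun j _ => sub_nonneg.2 (hc (n - 1 - j)).2) fun j _ => sub_le_sub_left (hc _).1 1
  rw [Real.norm_eq_abs, abs_mul, abs_of_nonneg hev, mul_comm]
  exact mul_le_mul (hu _) hev_le hev ((abs_nonneg _).trans (hu 0))

theorem summable_evolution_mul (hc : ∀ n, c n ∈ Set.Icc κ 1) (hκ : 0 < κ)
    (hu : ∀ n, |u n| ≤ M) (n : ℤ) : Summable fun k : ℕ => evolution c n k * u (n - 1 - k) :=
  Summable.of_norm_bounded (hasSum_mul_one_sub_pow M hκ ((hc 0).1.trans (hc 0).2)).summable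
    (norm_evolution_mul_le hc hu n)

theorem abs_boundedSol_le (hc : ∀ n, c n ∈ Set.Icc κ 1) (hκ : 0 < κ) (hu : ∀ n, |u n| ≤ M)
    (n : ℤ) : |boundedSol c u n| ≤ M / κ :=
  tsum_of_norm_bounded (hasSum_mul_one_sub_pow M hκ ((hc 0).1.trans (hc 0).2))
    (norm_evolution_mul_le hc hu n)

theorem boundedSol_sub (hc : ∀ n, c n ∈ Set.Icc κ 1) (hκ : 0 < κ) (hu : ∀ n, |u n| ≤ M)
    (hw : ∀ n, |w n| ≤ M') (n : ℤ) :
    boundedSol c u n - boundedSol c w n = boundedSol c (fun s => u s - w s) n := by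
  simp only [boundedSol, mul_sub]
  exact (Summable.tsum_sub (summable_evolution_mul hc hκ hu n)
    (summable_evolution_mul hc hκ hw n)).symm

theorem boundedSol_succ (hc : ∀ n, c n ∈ Set.Icc κ 1) (hκ : 0 < κ) (hu : ∀ n, |u n| ≤ M)
    (n : ℤ) : boundedSol c u (n + 1) = (1 - c n) * boundedSol c u n + u n := by
  rw [boundedSol, (summable_evolution_mul hc hκ hu (n + 1)).tsum_eq_zero_add, boundedSol,
    ← tsum_mul_left, add_comm]
  congr 1
  · refine tsum_congr fun k => ?_
    rw [evolution_succ, show n + 1 - 1 - ((k + 1 : ℕ) : ℤ) = n - 1 - k by push_cast; ring]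
    ring
  · simp [evolution]

theorem abs_boundedSol_sub_sum_le (hc : ∀ n, c n ∈ Set.Icc κ 1) (hκ : 0 < κ)
    (hu : ∀ n, |u n| ≤ M) (n : ℤ) (K : ℕ) :
    |boundedSol c u n - ∑ k ∈ Finset.range K, evolution c n k * u (n - 1 - k)|
      ≤ M * (1 - κ) ^ K / κ := by
  rw [boundedSol, ← (summable_evolution_mul hc hκ hu n).sum_add_tsum_nat_add K,
    add_sub_cancel_left, ← Real.norm_eq_abs]
  have htail := (hasSum_mul_one_sub_pow M hκ ((hc 0).1.trans (hc 0).2)).mul_left ((1 - κ) ^ K)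
  rw [← mul_div_assoc, mul_comm _ M] at htail
  refine tsum_of_norm_bounded htail fun k => ?_
  have := norm_evolution_mul_le hc hu n (k + K)
  push_cast at this ⊢
  exact this.trans_eq (by ring)

theorem APseq.boundedSol (hc : ∀ n, c n ∈ Set.Icc κ 1) (hκ : 0 < κ) (hu : ∀ n, |u n| ≤ M)
    (hc_ap : APseq c) (hu_ap : APseq u) : APseq (boundedSol c u) := by
  refine APseq.of_uniform_approx fun ε hε => ?_
  have hlim : Tendsto (fun K : ℕ => M * (1 - κ) ^ K / κ) atTop (𝓝 0) := by
    simpa using ((tendsto_pow_atTop_nhds_zero_of_lt_one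
      (sub_nonneg.2 ((hc 0).1.trans (hc 0).2)) (by linarith)).const_mul M).div_const κ
  obtain ⟨K, hK⟩ := (hlim.eventually (ge_mem_nhds hε)).exists
  exact ⟨_, APseq.sum fun k _ =>
    (hc_ap.evolution k).mul ((hu_ap.comp_sub_const k).comp_sub_const 1),
    fun n => (abs_boundedSol_sub_sum_le hc hκ hu n K).trans hK⟩

end LinearEquation

namespace Hopfield

variable {m : ℕ} (a : Fin m → Fin m → ℤ → ℝ) (b : Fin m → Fin m → Fin m → ℤ → ℝ)
  (I : Fin m → ℤ → ℝ) (γ : Fin m → Fin m → ℤ → ℕ) (ω v : Fin m → Fin m → Fin m → ℤ → ℕ)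
  (F G : Fin m → ℝ → ℝ)

def forcing (x : ℤ → Fin m → ℝ) (i : Fin m) (n : ℤ) : ℝ :=
  (∑ j, a i j n * F j (x (n - γ i j n) j)) +
    (∑ j, ∑ l, b i j l n * G j (x (n - ω i j l n) j) * G l (x (n - v i j l n) l)) + I i n

noncomputable def solutionOp (c : Fin m → ℤ → ℝ) (x : ℤ → Fin m → ℝ) : ℤ → Fin m → ℝ :=
  fun n i => boundedSol (c i) (forcing a b I γ ω v F G x i) n

def eta (ap : Fin m → Fin m → ℝ) (bp : Fin m → Fin m → Fin m → ℝ) (ep ve : Fin m → ℝ) (r : ℝ)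
    (i : Fin m) : ℝ :=
  ∑ j, (ap i j * (|F j 0| + ep j * r) +
    (|G j 0| + ve j * r) * ∑ l, bp i j l * (|G l 0| + ve l * r))

def etaBar (ap : Fin m → Fin m → ℝ) (bp : Fin m → Fin m → Fin m → ℝ) (ep ve N : Fin m → ℝ)
    (i : Fin m) : ℝ :=
  (∑ j, ap i j * ep j) + ∑ j, ∑ l, bp i j l * (N l * ve j + N j * ve l)

def apBall (m : ℕ) (r : ℝ) : Set (ℤ → Fin m → ℝ) :=
  {x | (∀ n i, |x n i| ≤ r) ∧ ∀ i, APseq fun n => x n i}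

variable {a b I γ ω v F G} {c : Fin m → ℤ → ℝ} {x y : ℤ → Fin m → ℝ} {r : ℝ}
  {cm ep ve N Ip : Fin m → ℝ} {ap : Fin m → Fin m → ℝ} {bp : Fin m → Fin m → Fin m → ℝ}

theorem abs_forcing_le (hx : ∀ n j, |x n j| ≤ r)
    (hF : ∀ j u w, |F j u - F j w| ≤ ep j * |u - w|)
    (hG : ∀ j u w, |G j u - G j w| ≤ ve j * |u - w|) (ha : ∀ i j n, |a i j n| ≤ ap i j)
    (hb : ∀ i j l n, |b i j l n| ≤ bp i j l) (hI : ∀ i n, |I i n| ≤ Ip i) (i : Fin m) (n : ℤ) :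
    |forcing a b I γ ω v F G x i n| ≤ eta F G ap bp ep ve r i + Ip i := by
  have hFx : ∀ j s, |F j (x s j)| ≤ |F j 0| + ep j * r := fun j s =>
    abs_le_abs_zero_add_of_lipschitz (hF j) (hx s j)
  have hGx : ∀ j s, |G j (x s j)| ≤ |G j 0| + ve j * r := fun j s =>
    abs_le_abs_zero_add_of_lipschitz (hG j) (hx s j)
  have hbp : ∀ j l, 0 ≤ bp i j l := fun j l => (abs_nonneg _).trans (hb i j l 0)
  rw [eta, Finset.sum_add_distrib]
  refine (abs_add_three _ _ _).trans (add_le_add (add_le_add ?_ ?_) (hI i n))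
  · refine (Finset.abs_sum_le_sum_abs _ _).trans (Finset.sum_le_sum fun j _ => ?_)
    rw [abs_mul]
    exact mul_le_mul (ha i j n) (hFx j _) (abs_nonneg _) ((abs_nonneg _).trans (ha i j n))
  · refine (Finset.abs_sum_le_sum_abs _ _).trans (Finset.sum_le_sum fun j _ => ?_)
    rw [Finset.mul_sum]
    refine (Finset.abs_sum_le_sum_abs _ _).trans (Finset.sum_le_sum fun l _ => ?_)
    rw [abs_mul, abs_mul]
    exact (mul_le_mul (mul_le_mul (hb i j l n) (hGx j _) (abs_nonneg _) (hbp j l)) (hGx l _)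
      (abs_nonneg _) (mul_nonneg (hbp j l) ((abs_nonneg _).trans (hGx j 0)))).trans_eq (by ring)

theorem abs_forcing_sub_le {d : ℝ} (hxy : ∀ n j, |x n j - y n j| ≤ d)
    (hF : ∀ j u w, |F j u - F j w| ≤ ep j * |u - w|)
    (hG : ∀ j u w, |G j u - G j w| ≤ ve j * |u - w|) (hGN : ∀ j u, |G j u| ≤ N j)
    (ha : ∀ i j n, |a i j n| ≤ ap i j) (hb : ∀ i j l n, |b i j l n| ≤ bp i j l)
    (i : Fin m) (n : ℤ) :
    |forcing a b I γ ω v F G x i n - forcing a b I γ ω v F G y i n| ≤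
      etaBar ap bp ep ve N i * d := by
  have hFd : ∀ j s, |F j (x s j) - F j (y s j)| ≤ ep j * d := fun j s =>
    (hF j _ _).trans (mul_le_mul_of_nonneg_left (hxy s j) (nonneg_of_lipschitz (hF j)))
  have hGd : ∀ j s, |G j (x s j) - G j (y s j)| ≤ ve j * d := fun j s =>
    (hG j _ _).trans (mul_le_mul_of_nonneg_left (hxy s j) (nonneg_of_lipschitz (hG j)))
  have hsplit : forcing a b I γ ω v F G x i n - forcing a b I γ ω v F G y i n =
      (∑ j, a i j n * (F j (x (n - γ i j n) j) - F j (y (n - γ i j n) j))) +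
      ∑ j, ∑ l, b i j l n * (G j (x (n - ω i j l n) j) * G l (x (n - v i j l n) l) -
        G j (y (n - ω i j l n) j) * G l (y (n - v i j l n) l)) := by
    simp only [forcing, mul_sub, ← mul_assoc, Finset.sum_sub_distrib]
    ring
  rw [hsplit, etaBar, add_mul, Finset.sum_mul, Finset.sum_mul]
  refine (abs_add_le _ _).trans (add_le_add ?_ ?_)
  · refine (Finset.abs_sum_le_sum_abs _ _).trans (Finset.sum_le_sum fun j _ => ?_)
    rw [abs_mul, mul_assoc]
    exact mul_le_mul (ha i j n) (hFd j _) (abs_nonneg _) ((abs_nonneg _).trans (ha i j n))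
  · refine (Finset.abs_sum_le_sum_abs _ _).trans (Finset.sum_le_sum fun j _ => ?_)
    rw [Finset.sum_mul]
    refine (Finset.abs_sum_le_sum_abs _ _).trans (Finset.sum_le_sum fun l _ => ?_)
    have hd : 0 ≤ d := (abs_nonneg _).trans (hxy 0 j)
    have hGG := (abs_mul_sub_mul_le _ _ _ _).trans (add_le_add
      (mul_le_mul (hGd j (n - ω i j l n)) (hGN l (x (n - v i j l n) l)) (abs_nonneg _)
        (mul_nonneg (nonneg_of_lipschitz (hG j)) hd))
      (mul_le_mul (hGN j (y (n - ω i j l n) j)) (hGd l (n - v i j l n)) (abs_nonneg _)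
        ((abs_nonneg _).trans (hGN j 0))))
    rw [abs_mul]
    exact (mul_le_mul (hb i j l n) hGG (abs_nonneg _)
      ((abs_nonneg _).trans (hb i j l n))).trans_eq (by ring)

theorem apseq_forcing (hx : ∀ j, APseq fun n => x n j) (ha : ∀ i j, APseq (a i j))
    (hb : ∀ i j l, APseq (b i j l)) (hI : ∀ i, APseq (I i))
    (hγ : ∀ i j, APseq fun n => (γ i j n : ℝ)) (hω : ∀ i j l, APseq fun n => (ω i j l n : ℝ))
    (hv : ∀ i j l, APseq fun n => (v i j l n : ℝ))
    (hF : ∀ j u w, |F j u - F j w| ≤ ep j * |u - w|)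
    (hG : ∀ j u w, |G j u - G j w| ≤ ve j * |u - w|) (i : Fin m) :
    APseq (forcing a b I γ ω v F G x i) :=
  ((APseq.sum fun j _ => (ha i j).mul (((hx j).comp_sub_delay (hγ i j)).comp_lipschitz (hF j))).add
    (APseq.sum fun j _ => APseq.sum fun l _ =>
      ((hb i j l).mul (((hx j).comp_sub_delay (hω i j l)).comp_lipschitz (hG j))).mul
        (((hx l).comp_sub_delay (hv i j l)).comp_lipschitz (hG l)))).add (hI i)

theorem mem_apBall_of_uniform_approx (x : ℤ → Fin m → ℝ)
    (hx : ∀ ε > 0, ∃ y ∈ apBall m r, ∀ n, dist (x n) (y n) ≤ ε) : x ∈ apBall m r := by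
  have happrox : ∀ ε > 0, ∃ y ∈ apBall m r, ∀ n i, |x n i - y n i| ≤ ε := fun ε hε => by
    obtain ⟨y, hy, hxy⟩ := hx ε hε
    exact ⟨y, hy, fun n i => by
      simpa only [Real.dist_eq] using (dist_le_pi_dist _ _ i).trans (hxy n)⟩
  refine ⟨fun n i => le_of_forall_pos_le_add fun ε hε => ?_, fun i => ?_⟩
  · obtain ⟨y, hy, hxy⟩ := happrox ε hε
    linarith [abs_sub_abs_le_abs_sub (x n i) (y n i), hy.1 n i, hxy n i]
  · refine APseq.of_uniform_approx fun ε hε => ?_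
    obtain ⟨y, hy, hxy⟩ := happrox ε hε
    exact ⟨fun n => y n i, hy.2 i, fun n => hxy n i⟩

theorem mapsTo_solutionOp (hc : ∀ i n, c i n ∈ Set.Icc (cm i) 1) (hcm : ∀ i, 0 < cm i)
    (hc_ap : ∀ i, APseq (c i)) (ha_ap : ∀ i j, APseq (a i j)) (hb_ap : ∀ i j l, APseq (b i j l))
    (hI_ap : ∀ i, APseq (I i)) (hγ : ∀ i j, APseq fun n => (γ i j n : ℝ))
    (hω : ∀ i j l, APseq fun n => (ω i j l n : ℝ)) (hv : ∀ i j l, APseq fun n => (v i j l n : ℝ))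
    (hF : ∀ j u w, |F j u - F j w| ≤ ep j * |u - w|)
    (hG : ∀ j u w, |G j u - G j w| ≤ ve j * |u - w|) (ha : ∀ i j n, |a i j n| ≤ ap i j)
    (hb : ∀ i j l n, |b i j l n| ≤ bp i j l) (hI : ∀ i n, |I i n| ≤ Ip i)
    (hη : ∀ i, eta F G ap bp ep ve r i / cm i + Ip i / cm i ≤ r) :
    Set.MapsTo (solutionOp a b I γ ω v F G c) (apBall m r) (apBall m r) := fun x hx =>
  have hgx := abs_forcing_le hx.1 hF hG ha hb hI
  ⟨fun n i => (abs_boundedSol_le (hc i) (hcm i) (hgx i) n).trans (by rw [add_div]; exact hη i),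
    fun i => APseq.boundedSol (hc i) (hcm i) (hgx i) (hc_ap i)
      (apseq_forcing hx.2 ha_ap hb_ap hI_ap hγ hω hv hF hG i)⟩

theorem abs_solutionOp_sub_le (hc : ∀ i n, c i n ∈ Set.Icc (cm i) 1) (hcm : ∀ i, 0 < cm i)
    (hx : ∀ n j, |x n j| ≤ r) (hy : ∀ n j, |y n j| ≤ r) {d : ℝ}
    (hxy : ∀ n j, |x n j - y n j| ≤ d) (hF : ∀ j u w, |F j u - F j w| ≤ ep j * |u - w|)
    (hG : ∀ j u w, |G j u - G j w| ≤ ve j * |u - w|) (hGN : ∀ j u, |G j u| ≤ N j)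
    (ha : ∀ i j n, |a i j n| ≤ ap i j) (hb : ∀ i j l n, |b i j l n| ≤ bp i j l)
    (hI : ∀ i n, |I i n| ≤ Ip i) (n : ℤ) (i : Fin m) :
    |solutionOp a b I γ ω v F G c x n i - solutionOp a b I γ ω v F G c y n i| ≤
      etaBar ap bp ep ve N i / cm i * d := by
  rw [solutionOp, solutionOp, boundedSol_sub (hc i) (hcm i)
    (abs_forcing_le hx hF hG ha hb hI i) (abs_forcing_le hy hF hG ha hb hI i),
    div_mul_eq_mul_div]
  exact abs_boundedSol_le (hc i) (hcm i) (abs_forcing_sub_le hxy hF hG hGN ha hb i) n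

theorem exists_apseq_solution (hr : 0 ≤ r) (hc : ∀ i n, c i n ∈ Set.Icc (cm i) 1)
    (hcm : ∀ i, 0 < cm i) (hc_ap : ∀ i, APseq (c i)) (ha_ap : ∀ i j, APseq (a i j))
    (hb_ap : ∀ i j l, APseq (b i j l)) (hI_ap : ∀ i, APseq (I i))
    (hγ : ∀ i j, APseq fun n => (γ i j n : ℝ)) (hω : ∀ i j l, APseq fun n => (ω i j l n : ℝ))
    (hv : ∀ i j l, APseq fun n => (v i j l n : ℝ))
    (hF : ∀ j u w, |F j u - F j w| ≤ ep j * |u - w|)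
    (hG : ∀ j u w, |G j u - G j w| ≤ ve j * |u - w|) (hGN : ∀ j u, |G j u| ≤ N j)
    (ha : ∀ i j n, |a i j n| ≤ ap i j) (hb : ∀ i j l n, |b i j l n| ≤ bp i j l)
    (hI : ∀ i n, |I i n| ≤ Ip i) (hη : ∀ i, eta F G ap bp ep ve r i / cm i + Ip i / cm i ≤ r)
    (hη' : ∀ i, etaBar ap bp ep ve N i < cm i) :
    ∃ x ∈ apBall m r, ∀ n i, x (n + 1) i = (1 - c i n) * x n i + forcing a b I γ ω v F G x i n := by
  obtain ⟨ρ, hρ1, hρ⟩ := exists_nnreal_lt_one_forall_le fun i => (div_lt_one (hcm i)).2 (hη' i)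
  obtain ⟨x, hx, hfix⟩ := exists_fixedPoint_of_uniform_contraction (S := apBall m r)
    (fun x hx n => (pi_norm_le_iff_of_nonneg hr).2 fun i => hx.1 n i)
    mem_apBall_of_uniform_approx ⟨0, fun _ _ => by simpa using hr, fun _ => APseq.const 0⟩
    (mapsTo_solutionOp hc hcm hc_ap ha_ap hb_ap hI_ap hγ hω hv hF hG ha hb hI hη) hρ1
    fun x hx y hy d hd hxy n => (dist_pi_le_iff (by positivity)).2 fun i => by
      have hxy' : ∀ n j, |x n j - y n j| ≤ d := fun n j => by
        simpa only [Real.dist_eq] using (dist_le_pi_dist _ _ j).trans (hxy n)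
      exact (abs_solutionOp_sub_le hc hcm hx.1 hy.1 hxy' hF hG hGN ha hb hI n i).trans
        (mul_le_mul_of_nonneg_right (hρ i) hd)
  refine ⟨x, hx, fun n i => ?_⟩
  conv_lhs => rw [← hfix]
  rw [solutionOp, boundedSol_succ (hc i) (hcm i) (abs_forcing_le hx.1 hF hG ha hb hI i)]
  exact congrArg (fun z => (1 - c i n) * z i + _) (congrFun hfix n)

theorem eq_of_recurrence (hc : ∀ i n, c i n ∈ Set.Icc (cm i) 1)
    (hF : ∀ j u w, |F j u - F j w| ≤ ep j * |u - w|)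
    (hG : ∀ j u w, |G j u - G j w| ≤ ve j * |u - w|) (hGN : ∀ j u, |G j u| ≤ N j)
    (ha : ∀ i j n, |a i j n| ≤ ap i j) (hb : ∀ i j l n, |b i j l n| ≤ bp i j l)
    (hη' : ∀ i, etaBar ap bp ep ve N i < cm i)
    (hx : ∀ n i, x (n + 1) i = (1 - c i n) * x n i + forcing a b I γ ω v F G x i n)
    (hy : ∀ n i, y (n + 1) i = (1 - c i n) * y n i + forcing a b I γ ω v F G y i n)
    (hxr : ∀ n i, |x n i| ≤ r) (hyr : ∀ n i, |y n i| ≤ r) : x = y := by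
  obtain ⟨σ, hσ1, hσ⟩ := exists_nnreal_lt_one_forall_le
    (f := fun i => 1 - cm i + etaBar ap bp ep ve N i) fun i => by linarith [hη' i]
  have hcontract : ∀ D, (∀ p : ℤ × Fin m, |x p.1 p.2 - y p.1 p.2| ≤ D) →
      ∀ p : ℤ × Fin m, |x p.1 p.2 - y p.1 p.2| ≤ σ * D := by
    rintro D hD ⟨n, i⟩
    have hD0 : 0 ≤ D := (abs_nonneg _).trans (hD (n, i))
    obtain ⟨n, rfl⟩ : ∃ k, n = k + 1 := ⟨n - 1, by ring⟩
    calc |x (n + 1) i - y (n + 1) i|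
        = |(1 - c i n) * (x n i - y n i) +
            (forcing a b I γ ω v F G x i n - forcing a b I γ ω v F G y i n)| := by
          rw [hx, hy]; ring_nf
      _ ≤ (1 - cm i) * D + etaBar ap bp ep ve N i * D := by
          refine (abs_add_le _ _).trans (add_le_add ?_
            (abs_forcing_sub_le (fun n j => hD (n, j)) hF hG hGN ha hb i n))
          rw [abs_mul, abs_of_nonneg (sub_nonneg.2 (hc i n).2)]
          exact mul_le_mul (sub_le_sub_left (hc i n).1 1) (hD (n, i)) (abs_nonneg _)
            (sub_nonneg.2 ((hc i n).1.trans (hc i n).2))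
      _ ≤ σ * D := by rw [← add_mul]; exact mul_le_mul_of_nonneg_right (hσ i) hD0
  funext n i
  exact sub_eq_zero.1 <| eq_zero_of_abs_le_of_contracting_bound (B := 2 * r)
    (fun p => (abs_sub _ _).trans (by linarith [hxr p.1 p.2, hyr p.1 p.2])) σ.2 hσ1 hcontract
    (n, i)

theorem sub_eq_iff_eq_forcing (x : ℤ → Fin m → ℝ) (n : ℤ) (i : Fin m) :
    x (n + 1) i - x n i = -(c i n) * x n i + (∑ j, a i j n * F j (x (n - γ i j n) j)) +
        (∑ j, ∑ l, b i j l n * G j (x (n - ω i j l n) j) * G l (x (n - v i j l n) l)) + I i n ↔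
      x (n + 1) i = (1 - c i n) * x n i + forcing a b I γ ω v F G x i n := by
  rw [forcing]
  constructor <;> intro h <;> linarith

end Hopfield

theorem stmt_16_general (m : ℕ) (r₀ : ℝ) (hr₀ : 0 < r₀)
    (c I : Fin m → ℤ → ℝ)
    (a : Fin m → Fin m → ℤ → ℝ)
    (b : Fin m → Fin m → Fin m → ℤ → ℝ)
    (γ : Fin m → Fin m → ℤ → ℕ)
    (ω v : Fin m → Fin m → Fin m → ℤ → ℕ)
    (hc : ∀ i, APseq (c i)) (hI : ∀ i, APseq (I i))
    (ha : ∀ i j, APseq (a i j)) (hb : ∀ i j l, APseq (b i j l))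
    (hγ : ∀ i j, APseq fun n => (γ i j n : ℝ))
    (hω : ∀ i j l, APseq fun n => (ω i j l n : ℝ))
    (hv : ∀ i j l, APseq fun n => (v i j l n : ℝ))
    (F G : Fin m → ℝ → ℝ) (ep ve N : Fin m → ℝ)
    -- (H1)
    (H1f : ∀ j, ∀ u w : ℝ, |F j u - F j w| ≤ ep j * |u - w|)
    (H1g : ∀ j, ∀ u w : ℝ, |G j u - G j w| ≤ ve j * |u - w|)
    -- (H2)
    (H2 : ∀ j, ∀ u : ℝ, |G j u| ≤ N j)
    -- infima ĉᵢ⁻ and suprema â⁺ᵢⱼ, b̂⁺ᵢⱼₗ, Î⁺ᵢ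
    (cm Ip : Fin m → ℝ)
    (ap : Fin m → Fin m → ℝ) (bp : Fin m → Fin m → Fin m → ℝ)
    (hcm : ∀ i, IsGLB (Set.range (c i)) (cm i))
    (hap : ∀ i j, IsLUB (Set.range fun n => |a i j n|) (ap i j))
    (hbp : ∀ i j l, IsLUB (Set.range fun n => |b i j l n|) (bp i j l))
    (hIp : ∀ i, IsLUB (Set.range fun n => |I i n|) (Ip i))
    -- (H3)
    (H3a : ∀ i, ∀ n : ℤ, 0 < 1 - c i n)
    (H3b : ∀ i, 0 < cm i)
    -- (H4): max_i (ηᵢ/ĉᵢ⁻) + L ≤ r₀ and max_i η̄ᵢ < min_i ĉᵢ⁻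
    (H4a : ∀ i i' : Fin m,
      (∑ j, (ap i j * (|F j 0| + ep j * r₀) +
        (|G j 0| + ve j * r₀) * ∑ l, bp i j l * (|G l 0| + ve l * r₀))) / cm i
        + Ip i' / cm i' ≤ r₀)
    (H4b : ∀ i i' : Fin m,
      (∑ j, ap i j * ep j) +
        (∑ j, ∑ l, bp i j l * (N l * ve j + N j * ve l)) < cm i') :
    ∃! x : ℤ → Fin m → ℝ,
      (∀ n : ℤ, ∀ i : Fin m,
        x (n + 1) i - x n i =
          -(c i n) * x n i +
          (∑ j, a i j n * F j (x (n - γ i j n) j)) +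
          (∑ j, ∑ l, b i j l n * G j (x (n - ω i j l n) j) * G l (x (n - v i j l n) l)) +
          I i n) ∧
      (∀ i, APseq fun n => x n i) ∧
      (∀ n : ℤ, ∀ i : Fin m, |x n i| ≤ r₀) := by
  have hc' : ∀ i n, c i n ∈ Set.Icc (cm i) 1 := fun i n =>
    ⟨(hcm i).1 ⟨n, rfl⟩, by linarith [H3a i n]⟩
  have ha' : ∀ i j n, |a i j n| ≤ ap i j := fun i j n => (hap i j).1 ⟨n, rfl⟩
  have hb' : ∀ i j l n, |b i j l n| ≤ bp i j l := fun i j l n => (hbp i j l).1 ⟨n, rfl⟩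
  have hI' : ∀ i n, |I i n| ≤ Ip i := fun i n => (hIp i).1 ⟨n, rfl⟩
  obtain ⟨x, ⟨hxr, hx_ap⟩, hx⟩ := Hopfield.exists_apseq_solution hr₀.le hc' H3b hc ha hb hI
    hγ hω hv H1f H1g H2 ha' hb' hI' (fun i => H4a i i) (fun i => H4b i i)
  refine ⟨x, ⟨fun n i => (Hopfield.sub_eq_iff_eq_forcing x n i).2 (hx n i), hx_ap, hxr⟩, ?_⟩
  rintro y ⟨hy, -, hyr⟩
  exact Hopfield.eq_of_recurrence hc' H1f H1g H2 ha' hb' (fun i => H4b i i)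
    (fun n i => (Hopfield.sub_eq_iff_eq_forcing y n i).1 (hy n i)) hx hyr hxr

/-- Existence and uniqueness of a bounded almost periodic solution of the high-order
Hopfield neural network system (the `t = q^n` transform of the network on the quantum
time scale) under hypotheses (H1)–(H4). -/
theorem stmt_16 (m : ℕ) (hm : 0 < m) (r₀ : ℝ) (hr₀ : 0 < r₀)
    (c I : Fin m → ℤ → ℝ)
    (a : Fin m → Fin m → ℤ → ℝ)
    (b : Fin m → Fin m → Fin m → ℤ → ℝ)
    (γ : Fin m → Fin m → ℤ → ℕ)
    (ω v : Fin m → Fin m → Fin m → ℤ → ℕ)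
    (hc : ∀ i, APseq (c i)) (hI : ∀ i, APseq (I i))
    (ha : ∀ i j, APseq (a i j)) (hb : ∀ i j l, APseq (b i j l))
    (hγ : ∀ i j, APseq fun n => (γ i j n : ℝ))
    (hω : ∀ i j l, APseq fun n => (ω i j l n : ℝ))
    (hv : ∀ i j l, APseq fun n => (v i j l n : ℝ))
    (F G : Fin m → ℝ → ℝ) (ep ve N : Fin m → ℝ)
    (hep : ∀ j, 0 < ep j) (hve : ∀ j, 0 < ve j) (hN : ∀ j, 0 < N j)
    -- (H1)
    (H1f : ∀ j, ∀ u w : ℝ, |F j u - F j w| ≤ ep j * |u - w|)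
    (H1g : ∀ j, ∀ u w : ℝ, |G j u - G j w| ≤ ve j * |u - w|)
    -- (H2)
    (H2 : ∀ j, ∀ u : ℝ, |G j u| ≤ N j)
    -- infima ĉᵢ⁻ and suprema â⁺ᵢⱼ, b̂⁺ᵢⱼₗ, Î⁺ᵢ
    (cm Ip : Fin m → ℝ)
    (ap : Fin m → Fin m → ℝ) (bp : Fin m → Fin m → Fin m → ℝ)
    (hcm : ∀ i, IsGLB (Set.range (c i)) (cm i))
    (hap : ∀ i j, IsLUB (Set.range fun n => |a i j n|) (ap i j))
    (hbp : ∀ i j l, IsLUB (Set.range fun n => |b i j l n|) (bp i j l))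
    (hIp : ∀ i, IsLUB (Set.range fun n => |I i n|) (Ip i))
    -- (H3)
    (H3a : ∀ i, ∀ n : ℤ, 0 < 1 - c i n)
    (H3b : ∀ i, 0 < cm i)
    -- (H4): max_i (ηᵢ/ĉᵢ⁻) + L ≤ r₀ and max_i η̄ᵢ < min_i ĉᵢ⁻
    (H4a : ∀ i i' : Fin m,
      (∑ j, (ap i j * (|F j 0| + ep j * r₀) +
        (|G j 0| + ve j * r₀) * ∑ l, bp i j l * (|G l 0| + ve l * r₀))) / cm i
        + Ip i' / cm i' ≤ r₀)
    (H4b : ∀ i i' : Fin m,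
      (∑ j, ap i j * ep j) +
        (∑ j, ∑ l, bp i j l * (N l * ve j + N j * ve l)) < cm i') :
    ∃! x : ℤ → Fin m → ℝ,
      (∀ n : ℤ, ∀ i : Fin m,
        x (n + 1) i - x n i =
          -(c i n) * x n i +
          (∑ j, a i j n * F j (x (n - γ i j n) j)) +
          (∑ j, ∑ l, b i j l n * G j (x (n - ω i j l n) j) * G l (x (n - v i j l n) l)) +
          I i n) ∧
      (∀ i, APseq fun n => x n i) ∧
      (∀ n : ℤ, ∀ i : Fin m, |x n i| ≤ r₀) :=
  stmt_16_general m r₀ hr₀ c I a b γ ω v hc hI ha hb hγ hω hv F G ep ve N H1f H1g H2 cm Ip ap bp hcm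
    hap hbp hIp H3a H3b H4a H4b
end
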